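/- arXiv:1403.4347 — 3 statements merged into one kernel-verified Lean document; each statement's English description precedes it below -/
import Mathlib

section
/- Let G be an abelian group, X a metric compactum with Ȟⁿ(X; G) ≠ 0, and α a non-zero element of Ȟⁿ(X; G). Then α has a carrier: there exists a closed non-empty set A ⊂ X such that i_A*(α) ≠ 0 and i_B*(α) = 0 for every proper closed subset B ⊂ A, where i_A and i_B denote the inclusions of A and B into X. -/
open Set Topology

/-- The continuous inclusion map between nested subspaces. -/
def inclCM {X : Type} [TopologicalSpace X] {A B : Set X} (h : A ⊆ B) : C(↥A, ↥B) :=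
  ⟨Set.inclusion h, continuous_inclusion h⟩

/-- The continuous inclusion of a subspace into the ambient space. -/
def subCM {X : Type} [TopologicalSpace X] (A : Set X) : C(↥A, X) :=
  ⟨Subtype.val, continuous_subtype_val⟩

/-- An abstract reduced Čech cohomology theory with coefficients in the abelian group `G`:
a contravariant, homotopy-invariant, group-valued functor on topological spaces which
vanishes in negative degrees, on subsingleton spaces, and in degree `0` on connected
spaces; whose coefficients are normalized by `Ȟ⁰(S⁰;G) ≃ G`; which has Mayer–Vietoris
exact sequences for closed covers of compact Hausdorff spaces; and which is continuous
with respect to directed intersections of closed subsets of compact Hausdorff spaces.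
On compact metric spaces these axioms characterize reduced Čech cohomology `Ȟⁿ(·;G)`. -/
structure CechTheory (G : Type) [AddCommGroup G] where
  /-- the reduced cohomology groups `Ȟⁿ(X;G)` -/
  coh : ℤ → (X : Type) → [TopologicalSpace X] → AddCommGrpCat.{0}
  /-- the induced (contravariant) homomorphism of a continuous map -/
  map : ∀ (n : ℤ) {X Y : Type} [TopologicalSpace X] [TopologicalSpace Y],
    C(X, Y) → (coh n Y →+ coh n X)
  map_id : ∀ (n : ℤ) (X : Type) [TopologicalSpace X],
    map n (ContinuousMap.id X) = AddMonoidHom.id _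
  map_comp : ∀ (n : ℤ) {X Y Z : Type} [TopologicalSpace X] [TopologicalSpace Y]
    [TopologicalSpace Z] (f : C(X, Y)) (g : C(Y, Z)),
    map n (g.comp f) = (map n f).comp (map n g)
  homotopy_invariant : ∀ (n : ℤ) {X Y : Type} [TopologicalSpace X] [TopologicalSpace Y]
    (f g : C(X, Y)), f.Homotopic g → map n f = map n g
  subsingleton_vanish : ∀ (n : ℤ) (X : Type) [TopologicalSpace X],
    Subsingleton X → ∀ α : coh n X, α = 0
  neg_vanish : ∀ (n : ℤ), n < 0 → ∀ (X : Type) [TopologicalSpace X] (α : coh n X), α = 0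
  connected_vanish : ∀ (X : Type) [TopologicalSpace X],
    ConnectedSpace X → ∀ α : coh 0 X, α = 0
  coeff : Nonempty (coh 0 Bool ≃+ G)
  /-- the Mayer–Vietoris connecting homomorphism for a closed cover `A ∪ B` -/
  delta : ∀ (n : ℤ) {X : Type} [TopologicalSpace X] (A B : Set X),
    coh n ↥(A ∩ B) →+ coh (n + 1) X
  mv_exact₁ : ∀ (n : ℤ) {X : Type} [TopologicalSpace X] [CompactSpace X] [T2Space X]
    {A B : Set X}, IsClosed A → IsClosed B → A ∪ B = Set.univ → (A ∩ B).Nonempty →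
    ∀ α : coh (n + 1) X,
      (map (n + 1) (subCM A) α = 0 ∧ map (n + 1) (subCM B) α = 0) ↔
        α ∈ Set.range (delta n A B)
  mv_exact₂ : ∀ (n : ℤ) {X : Type} [TopologicalSpace X] [CompactSpace X] [T2Space X]
    {A B : Set X}, IsClosed A → IsClosed B → A ∪ B = Set.univ → (A ∩ B).Nonempty →
    ∀ (α : coh n ↥A) (β : coh n ↥B),
      map n (inclCM Set.inter_subset_left) α = map n (inclCM Set.inter_subset_right) β ↔
        ∃ ξ : coh n X, map n (subCM A) ξ = α ∧ map n (subCM B) ξ = β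
  mv_exact₃ : ∀ (n : ℤ) {X : Type} [TopologicalSpace X] [CompactSpace X] [T2Space X]
    {A B : Set X}, IsClosed A → IsClosed B → A ∪ B = Set.univ → (A ∩ B).Nonempty →
    ∀ γ : coh n ↥(A ∩ B), delta n A B γ = 0 ↔
      ∃ (α : coh n ↥A) (β : coh n ↥B),
        γ = map n (inclCM Set.inter_subset_left) α - map n (inclCM Set.inter_subset_right) β
  cont_inj : ∀ (n : ℤ) {X : Type} [TopologicalSpace X] [CompactSpace X] [T2Space X]
    {ι : Type} (A : ι → Set X), (∀ i, IsClosed (A i)) →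
    (∀ i j, ∃ k, A k ⊆ A i ∧ A k ⊆ A j) →
    ∀ (i : ι) (α : coh n ↥(A i)),
      map n (inclCM (Set.iInter_subset A i)) α = 0 →
      ∃ (j : ι) (h : A j ⊆ A i), map n (inclCM h) α = 0
  cont_surj : ∀ (n : ℤ) {X : Type} [TopologicalSpace X] [CompactSpace X] [T2Space X]
    {ι : Type}, Nonempty ι → ∀ (A : ι → Set X), (∀ i, IsClosed (A i)) →
    (∀ i j, ∃ k, A k ⊆ A i ∧ A k ⊆ A j) →
    ∀ β : coh n ↥(⋂ i, A i), ∃ (i : ι) (α : coh n ↥(A i)),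
      map n (inclCM (Set.iInter_subset A i)) α = β

/-- A space is homogeneous if any point can be moved to any other point
by a self-homeomorphism. -/
def IsHomogeneous (X : Type) [TopologicalSpace X] : Prop :=
  ∀ x y : X, ∃ h : X ≃ₜ X, h x = y

/-- A metric space `X` is an ANR (absolute neighborhood retract) if whenever it is
embedded as a closed subset of a metric space, it is a retract of some neighborhood. -/
def IsANR (X : Type) [MetricSpace X] : Prop :=
  ∀ (Z : Type) [MetricSpace Z] (e : X → Z), Topology.IsClosedEmbedding e →
    ∃ U : Set Z, IsOpen U ∧ ∃ (hU : Set.range e ⊆ U) (r : C(↥U, X)),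
      ∀ x : X, r ⟨e x, hU ⟨x, rfl⟩⟩ = x

/-- `cdimLE T n Y` says that the cohomological dimension of `Y` with respect to the
coefficient group of `T` is at most `n`; for compacta this is equivalent (by the
standard characterization via extension of maps into Eilenberg–MacLane complexes)
to surjectivity of the restriction `Ȟⁿ(Y;G) → Ȟⁿ(A;G)` for every closed `A ⊆ Y`. -/
def cdimLE {G : Type} [AddCommGroup G] (T : CechTheory G) (n : ℤ)
    (Y : Type) [TopologicalSpace Y] : Prop :=
  ∀ A : Set Y, IsClosed A → Function.Surjective (T.map n (subCM A))

/-- `cdimEq T n Y`: `n` is the smallest integer with `cdimLE T n Y`,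
i.e. `dim_G Y = n`. -/
def cdimEq {G : Type} [AddCommGroup G] (T : CechTheory G) (n : ℤ)
    (Y : Type) [TopologicalSpace Y] : Prop :=
  cdimLE T n Y ∧ ∀ m : ℤ, m < n → ¬ cdimLE T m Y

/-- `P` is a partition in `X` between `U₁` and `U₂`: `P` is closed and `X \ P` is the
union of two disjoint open sets containing `U₁` and `U₂` respectively. -/
def IsPartitionBetween {X : Type} [TopologicalSpace X] (P U₁ U₂ : Set X) : Prop :=
  IsClosed P ∧ ∃ V₁ V₂ : Set X, IsOpen V₁ ∧ IsOpen V₂ ∧ U₁ ⊆ V₁ ∧ U₂ ⊆ V₂ ∧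
    Disjoint V₁ V₂ ∧ Pᶜ = V₁ ∪ V₂

lemma IsPartitionBetween.subset_compl {X : Type} [TopologicalSpace X] {P U₁ U₂ : Set X}
    (h : IsPartitionBetween P U₁ U₂) : P ⊆ (U₁ ∪ U₂)ᶜ := by
  obtain ⟨-, V₁, V₂, -, -, h₁, h₂, -, hP⟩ := h
  intro x hx hxU
  have : x ∈ Pᶜ := by
    rw [hP]
    exact hxU.elim (fun hh => Or.inl (h₁ hh)) (fun hh => Or.inr (h₂ hh))
  exact this hx

/-- `C` is a partition (separator) of the space `X`: `C` is closed and `X \ C` is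
disconnected, i.e. the union of two disjoint nonempty open sets. -/
def IsSeparator {X : Type} [TopologicalSpace X] (C : Set X) : Prop :=
  IsClosed C ∧ ∃ V₁ V₂ : Set X, IsOpen V₁ ∧ IsOpen V₂ ∧ V₁.Nonempty ∧ V₂.Nonempty ∧
    Disjoint V₁ V₂ ∧ Cᶜ = V₁ ∪ V₂

/-- `g : P → Y` is an `ω`-map: a continuous surjection admitting a finite open cover
`τ` of `Y` whose preimages refine `ω`. -/
def IsOmegaMapOn {X Y : Type} [TopologicalSpace X] [TopologicalSpace Y]
    (ω : Set (Set X)) (P : Set X) (g : C(↥P, Y)) : Prop :=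
  Function.Surjective g ∧ ∃ τ : Set (Set Y), τ.Finite ∧ (∀ t ∈ τ, IsOpen t) ∧
    ⋃₀ τ = Set.univ ∧ ∀ t ∈ τ, ∃ W ∈ ω, Subtype.val '' (⇑g ⁻¹' t) ⊆ W

/-- `K` is a `V_G^n`-continuum (with respect to the Čech theory `T`): for every two
open disjoint subsets `U₁, U₂` there is an open cover `ω` of `K₀ = K \ (U₁ ∪ U₂)` such
that no partition between `U₁` and `U₂` admits an `ω`-map `g` onto a space `Y` with
`g* : Ȟⁿ⁻¹(Y;G) → Ȟⁿ⁻¹(P;G)` trivial. -/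
def IsVContinuum {G : Type} [AddCommGroup G] (T : CechTheory G) (n : ℤ)
    (K : Type) [TopologicalSpace K] : Prop :=
  ∀ U₁ U₂ : Set K, IsOpen U₁ → IsOpen U₂ → Disjoint U₁ U₂ →
    ∃ ω : Set (Set K),
      (∀ W ∈ ω, ∃ O : Set K, IsOpen O ∧ W = O ∩ (U₁ ∪ U₂)ᶜ) ∧
      (U₁ ∪ U₂)ᶜ ⊆ ⋃₀ ω ∧
      ∀ P : Set K, IsPartitionBetween P U₁ U₂ →
        ∀ (Y : Type) [TopologicalSpace Y] (g : C(↥P, Y)),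
          IsOmegaMapOn ω P g → ¬ ∀ β : T.coh (n - 1) Y, T.map (n - 1) g β = 0

/-- `K` is a strong `V_G^n`-continuum: a `V_G^n`-continuum for which, in addition, the
cover `ω` of `K₀ = K \ (U₁ ∪ U₂)` can be chosen together with a class
`e ∈ Ȟⁿ⁻¹(K₀;G)` such that for every partition `P` between `U₁` and `U₂` and every
`ω`-map `g` of `P` onto a space `Y` one has `0 ≠ i_P*(e) ∈ g*(Ȟⁿ⁻¹(Y;G))`. -/
def IsStrongVContinuum {G : Type} [AddCommGroup G] (T : CechTheory G) (n : ℤ)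
    (K : Type) [TopologicalSpace K] : Prop :=
  ∀ U₁ U₂ : Set K, IsOpen U₁ → IsOpen U₂ → Disjoint U₁ U₂ →
    ∃ ω : Set (Set K),
      (∀ W ∈ ω, ∃ O : Set K, IsOpen O ∧ W = O ∩ (U₁ ∪ U₂)ᶜ) ∧
      (U₁ ∪ U₂)ᶜ ⊆ ⋃₀ ω ∧
      (∀ P : Set K, IsPartitionBetween P U₁ U₂ →
        ∀ (Y : Type) [TopologicalSpace Y] (g : C(↥P, Y)),
          IsOmegaMapOn ω P g → ¬ ∀ β : T.coh (n - 1) Y, T.map (n - 1) g β = 0) ∧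
      ∃ e : T.coh (n - 1) ↥(U₁ ∪ U₂)ᶜ,
        ∀ (P : Set K) (hP : IsPartitionBetween P U₁ U₂),
          ∀ (Y : Type) [TopologicalSpace Y] (g : C(↥P, Y)), IsOmegaMapOn ω P g →
            T.map (n - 1) (inclCM hP.subset_compl) e ≠ 0 ∧
            T.map (n - 1) (inclCM hP.subset_compl) e ∈ Set.range (T.map (n - 1) g)

/-- `X` is an Alexandroff manifold with respect to a class `𝒞` of spaces: for every
two disjoint closed massive (= nonempty interior) sets `X₀, X₁ ⊆ X` there is an open
cover `ω` of `X` such that no partition between `X₀` and `X₁` admits an `ω`-map onto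
a member of `𝒞`. -/
def IsAlexandroffManifold (X : Type) [TopologicalSpace X]
    (𝒞 : (Y : Type) → [TopologicalSpace Y] → Prop) : Prop :=
  ∀ X₀ X₁ : Set X, IsClosed X₀ → IsClosed X₁ → Disjoint X₀ X₁ →
    (interior X₀).Nonempty → (interior X₁).Nonempty →
    ∃ ω : Set (Set X), (∀ W ∈ ω, IsOpen W) ∧ ⋃₀ ω = Set.univ ∧
      ∀ P : Set X, IsPartitionBetween P X₀ X₁ →
        ∀ (Y : Type) [TopologicalSpace Y], 𝒞 Y →
          ∀ g : C(↥P, Y), ¬ IsOmegaMapOn ω P g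

/-- `A` is a (cohomological) carrier of the nonzero class `α ∈ Ȟⁿ(X;G)`: `A` is
closed and nonempty, `i_A*(α) ≠ 0`, and `i_B*(α) = 0` for every proper closed
subset `B ⊂ A`. -/
def IsCarrier {G : Type} [AddCommGroup G] (T : CechTheory G) (n : ℤ)
    {X : Type} [TopologicalSpace X] (A : Set X) (α : T.coh n X) : Prop :=
  IsClosed A ∧ A.Nonempty ∧ T.map n (subCM A) α ≠ 0 ∧
    ∀ B : Set X, IsClosed B → B ⊆ A → B ≠ A → T.map n (subCM B) α = 0


lemma cech_restrict {G : Type} [AddCommGroup G] (T : CechTheory G) (n : ℤ)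
    {X : Type} [TopologicalSpace X] {A B : Set X} (h : A ⊆ B) (α : T.coh n X) :
    T.map n (subCM A) α = T.map n (inclCM h) (T.map n (subCM B) α) := by
  have : (subCM B).comp (inclCM h) = subCM A := rfl
  rw [← this, T.map_comp]
  rfl

/-- **Lemma 2.1 (first part).** Every nonzero element `α ∈ Ȟⁿ(X;G)` of a metric
compactum `X` has a carrier: a closed nonempty `A ⊆ X` with `i_A*(α) ≠ 0` and
`i_B*(α) = 0` for every proper closed `B ⊂ A`. -/
theorem carrier_exists (G : Type) [AddCommGroup G] (T : CechTheory G) (n : ℤ)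
    (X : Type) [MetricSpace X] [CompactSpace X] :
    ∀ α : T.coh n X, α ≠ 0 → ∃ A : Set X, IsCarrier T n A α := by
  intro α hα
  set S : Set (Set X) := {A | IsClosed A ∧ T.map n (subCM A) α ≠ 0} with hS
  -- univ ∈ S
  have huniv : (Set.univ : Set X) ∈ S := by
    refine ⟨isClosed_univ, fun h0 => hα ?_⟩
    let e : C(X, ↥(Set.univ : Set X)) := ⟨fun x => ⟨x, trivial⟩, continuous_id.subtype_mk _⟩
    have hcomp : (subCM (Set.univ : Set X)).comp e = ContinuousMap.id X := rfl
    have := congrArg (fun f => f α) (by rw [← T.map_comp, hcomp, T.map_id] :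
      (T.map n e).comp (T.map n (subCM (Set.univ : Set X))) = AddMonoidHom.id _)
    simp only [AddMonoidHom.coe_comp, Function.comp_apply, AddMonoidHom.id_apply] at this
    rw [← this, h0, map_zero]
  -- chains have lower bounds
  have hchain : ∀ c ⊆ S, IsChain (· ⊆ ·) c → c.Nonempty →
      ∃ lb ∈ S, ∀ s ∈ c, lb ⊆ s := by
    intro c hcS hc hne
    set A : ↥c → Set X := fun i => (i : Set X) with hA
    have hAcl : ∀ i, IsClosed (A i) := fun i => (hcS i.2).1
    have hdir : ∀ i j : ↥c, ∃ k, A k ⊆ A i ∧ A k ⊆ A j := by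
      intro i j
      rcases eq_or_ne (i : Set X) (j : Set X) with h | h
      · exact ⟨i, subset_rfl, h.le⟩
      · rcases hc i.2 j.2 h with h' | h'
        · exact ⟨i, subset_rfl, h'⟩
        · exact ⟨j, h', subset_rfl⟩
    refine ⟨⋂ i, A i, ⟨isClosed_iInter hAcl, fun h0 => ?_⟩,
      fun s hs => Set.iInter_subset A ⟨s, hs⟩⟩
    · obtain ⟨s, hs⟩ := hne
      set i : ↥c := ⟨s, hs⟩
      have h1 : T.map n (inclCM (Set.iInter_subset A i)) (T.map n (subCM (A i)) α) = 0 := by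
        rw [← cech_restrict T n (Set.iInter_subset A i) α]; exact h0
      obtain ⟨j, hj, hj0⟩ := T.cont_inj n A hAcl hdir i _ h1
      rw [← cech_restrict T n hj α] at hj0
      exact (hcS j.2).2 hj0
  obtain ⟨m, -, hm⟩ := zorn_superset_nonempty S hchain Set.univ huniv
  have hmS : m ∈ S := hm.1
  have hmne : m.Nonempty := by
    by_contra h
    rw [Set.not_nonempty_iff_eq_empty] at h
    haveI : Subsingleton ↥m := ⟨fun a _ => absurd a.2 (by simp [h])⟩
    exact hmS.2 (T.subsingleton_vanish n ↥m this _)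
  refine ⟨m, hmS.1, hmne, hmS.2, fun B hB hBm hBne => ?_⟩
  by_contra h0
  exact hBne (le_antisymm hBm (hm.2 ⟨hB, h0⟩ hBm))
end

section
/- Let G be an abelian group, X a metric compactum, A ⊂ X a carrier of a non-trivial element α ∈ Ȟⁿ(X; G), and B a closed subset of X. Then A ⊂ B if and only if Ker(j_B*) ⊂ Ker(j_A*), where j_A : A ↪ A ∪ B and j_B : B ↪ A ∪ B are the inclusions and j_A*, j_B* the induced homomorphisms on Ȟⁿ(A ∪ B; G). -/
open Set Topology

lemma CechTheory.map_map {G : Type} [AddCommGroup G] (T : CechTheory G) (n : ℤ)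
    {X Y Z : Type} [TopologicalSpace X] [TopologicalSpace Y] [TopologicalSpace Z]
    (f : C(X, Y)) (g : C(Y, Z)) (ξ : T.coh n Z) :
    T.map n f (T.map n g ξ) = T.map n (g.comp f) ξ := by
  rw [T.map_comp]; rfl

/-- **Lemma 2.2.** Let `A` be a carrier of a nonzero `α ∈ Ȟⁿ(X;G)` and `B ⊆ X`
closed. Then `A ⊆ B` if and only if `Ker(j_B*) ⊆ Ker(j_A*)`, where
`j_A : A ↪ A ∪ B` and `j_B : B ↪ A ∪ B` are the inclusions. -/
theorem carrier_subset_iff_ker (G : Type) [AddCommGroup G] (T : CechTheory G) (n : ℤ)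
    (X : Type) [MetricSpace X] [CompactSpace X]
    (A B : Set X) (α : T.coh n X) (hcar : IsCarrier T n A α) (hB : IsClosed B) :
    A ⊆ B ↔ ∀ ξ : T.coh n ↥(A ∪ B),
      T.map n (inclCM (Set.subset_union_right : B ⊆ A ∪ B)) ξ = 0 →
      T.map n (inclCM (Set.subset_union_left : A ⊆ A ∪ B)) ξ = 0 := by
  obtain ⟨hA, hAne, hαA, hmin⟩ := hcar
  constructor
  · intro hAB ξ hξ
    have hfac : (inclCM (Set.subset_union_left : A ⊆ A ∪ B)) =
        (inclCM (Set.subset_union_right : B ⊆ A ∪ B)).comp (inclCM hAB) := rfl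
    rw [hfac, ← T.map_map, hξ, map_zero]
  · intro hker
    by_contra hAB
    obtain ⟨a, haA, haB⟩ := Set.not_subset.mp hAB
    haveI : CompactSpace ↥(A ∪ B) := isCompact_iff_compactSpace.mp (hA.union hB).isCompact
    set Y := ↥(A ∪ B)
    set A' : Set Y := Subtype.val ⁻¹' A with hA'def
    have hA'cl : IsClosed A' := hA.preimage continuous_subtype_val
    -- maps between ↥A and ↥A'
    let φA : C(↥A, ↥A') :=
      ⟨fun x => ⟨⟨x.1, Or.inl x.2⟩, x.2⟩,
        (continuous_subtype_val.subtype_mk _).subtype_mk _⟩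
    let ψA : C(↥A', ↥A) :=
      ⟨fun y => ⟨y.1.1, y.2⟩, (continuous_subtype_val.comp continuous_subtype_val).subtype_mk _⟩
    set αA := T.map n (subCM A) α with hαAdef
    set α' := T.map n ψA αA with hα'def
    have key : ∃ ξ : T.coh n Y, T.map n (subCM A') ξ = α' ∧
        T.map n (inclCM (Set.subset_union_right : B ⊆ A ∪ B)) ξ = 0 := by
      rcases (A ∩ B).eq_empty_or_nonempty with hABe | hABne
      · -- empty intersection: use B₂ = B ∪ {a}
        set B₂ : Set X := B ∪ {a} with hB₂def
        have hB₂cl : IsClosed B₂ := hB.union isClosed_singleton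
        set B₂' : Set Y := Subtype.val ⁻¹' B₂ with hB₂'def
        have hB₂'cl : IsClosed B₂' := hB₂cl.preimage continuous_subtype_val
        have huniv : A' ∪ B₂' = Set.univ := by
          ext y
          simp only [Set.mem_union, Set.mem_preimage, Set.mem_univ, iff_true]
          rcases y.2 with h | h
          · exact Or.inl h
          · exact Or.inr (Or.inl h)
        have hne : (A' ∩ B₂').Nonempty :=
          ⟨⟨a, Or.inl haA⟩, ⟨haA, Or.inr rfl⟩⟩
        haveI hss : Subsingleton ↥(A' ∩ B₂') := by
          constructor
          rintro ⟨⟨z, hz⟩, hzA, hzB⟩ ⟨⟨w, hw⟩, hwA, hwB⟩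
          have hz' : z = a := by
            rcases hzB with h | h
            · exact absurd (show z ∈ A ∩ B from ⟨hzA, h⟩) (by rw [hABe]; simp)
            · exact h
          have hw' : w = a := by
            rcases hwB with h | h
            · exact absurd (show w ∈ A ∩ B from ⟨hwA, h⟩) (by rw [hABe]; simp)
            · exact h
          exact Subtype.ext (Subtype.ext (hz'.trans hw'.symm))
        have hmv := (T.mv_exact₂ n hA'cl hB₂'cl huniv hne α' 0).mp ?_
        · obtain ⟨ξ, hξA, hξB⟩ := hmv
          refine ⟨ξ, hξA, ?_⟩
          let φB : C(↥B, ↥B₂') :=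
            ⟨fun x => ⟨⟨x.1, Or.inr x.2⟩, Or.inl x.2⟩,
              (continuous_subtype_val.subtype_mk _).subtype_mk _⟩
          have hfac : (inclCM (Set.subset_union_right : B ⊆ A ∪ B)) =
              (subCM B₂').comp φB := rfl
          rw [hfac, ← T.map_map, hξB, map_zero]
        · rw [T.subsingleton_vanish n _ hss (T.map n (inclCM Set.inter_subset_left) α'),
            T.subsingleton_vanish n _ hss (T.map n (inclCM Set.inter_subset_right) 0)]
      · -- nonempty intersection: use B directly
        set B' : Set Y := Subtype.val ⁻¹' B with hB'def
        have hB'cl : IsClosed B' := hB.preimage continuous_subtype_val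
        have huniv : A' ∪ B' = Set.univ := by
          ext y
          simp only [Set.mem_union, Set.mem_preimage, Set.mem_univ, iff_true]
          exact y.2
        obtain ⟨c, hcA, hcB⟩ := hABne
        have hne : (A' ∩ B').Nonempty := ⟨⟨c, Or.inl hcA⟩, hcA, hcB⟩
        -- restriction of α to A ∩ B vanishes
        have hABne' : A ∩ B ≠ A := fun h => haB ((h.symm ▸ haA : a ∈ A ∩ B).2)
        have hres : T.map n (subCM (A ∩ B)) α = 0 :=
          hmin (A ∩ B) (hA.inter hB) Set.inter_subset_left hABne'
        have hmv := (T.mv_exact₂ n hA'cl hB'cl huniv hne α' 0).mp ?_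
        · obtain ⟨ξ, hξA, hξB⟩ := hmv
          refine ⟨ξ, hξA, ?_⟩
          let φB : C(↥B, ↥B') :=
            ⟨fun x => ⟨⟨x.1, Or.inr x.2⟩, x.2⟩,
              (continuous_subtype_val.subtype_mk _).subtype_mk _⟩
          have hfac : (inclCM (Set.subset_union_right : B ⊆ A ∪ B)) =
              (subCM B').comp φB := rfl
          rw [hfac, ← T.map_map, hξB, map_zero]
        · rw [map_zero]
          let χ : C(↥(A' ∩ B'), ↥(A ∩ B)) :=
            ⟨fun z => ⟨z.1.1, z.2.1, z.2.2⟩,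
              (continuous_subtype_val.comp continuous_subtype_val).subtype_mk _⟩
          have : T.map n (inclCM (Set.inter_subset_left : A' ∩ B' ⊆ A')) α' =
              T.map n χ (T.map n (subCM (A ∩ B)) α) := by
            rw [hα'def, hαAdef, T.map_map, T.map_map, T.map_map]
            rfl
          rw [this, hres, map_zero]
    obtain ⟨ξ, hξA, hξB⟩ := key
    have hjA : T.map n (inclCM (Set.subset_union_left : A ⊆ A ∪ B)) ξ = αA := by
      have hfac : (inclCM (Set.subset_union_left : A ⊆ A ∪ B)) =
          (subCM A').comp φA := rfl
      rw [hfac, ← T.map_map, hξA, hα'def, T.map_map]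
      have : ψA.comp φA = ContinuousMap.id ↥A := rfl
      rw [this, T.map_id]
      rfl
    exact hαA (hjA ▸ hker ξ hξB)
end

section
/- Let G be an abelian group, n > 0, and X a metric compactum with cohomological dimension dim_G X ≤ n. Let A ⊂ X be a carrier for a non-trivial element of Ȟⁿ(X; G) and let f : X → X be a continuous map homotopic to the identity on X. Then A ⊂ f(A). -/
open Set Topology

lemma map_comp_apply {G : Type} [AddCommGroup G] (T : CechTheory G) (n : ℤ)
    {X Y Z : Type} [TopologicalSpace X] [TopologicalSpace Y] [TopologicalSpace Z]
    (f : C(X, Y)) (g : C(Y, Z)) (α : T.coh n Z) :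
    T.map n (g.comp f) α = T.map n f (T.map n g α) := by
  rw [T.map_comp]; rfl

/-- **Proposition 2.3.** Let `X` be a metric compactum with `dim_G X ≤ n` (`n > 0`),
`A ⊆ X` a carrier of a nonzero element of `Ȟⁿ(X;G)`, and `f : X → X` a map
homotopic to the identity. Then `A ⊆ f(A)`. -/
theorem carrier_subset_image (G : Type) [AddCommGroup G] (T : CechTheory G) (n : ℤ)
    (hn : 0 < n) (X : Type) [MetricSpace X] [CompactSpace X]
    (hdim : cdimLE T n X) (A : Set X) (α : T.coh n X) (hcar : IsCarrier T n A α)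
    (f : C(X, X)) (hf : f.Homotopic (ContinuousMap.id X)) :
    A ⊆ ⇑f '' A := by
  obtain ⟨hAclosed, hAne, hAα, hmin⟩ := hcar
  intro x hxA
  by_contra hxF
  have hAcomp : IsCompact A := hAclosed.isCompact
  have hFclosed : IsClosed (⇑f '' A) := (hAcomp.image f.continuous).isClosed
  -- a second point of `A`
  obtain ⟨a, haA, hax⟩ : ∃ a ∈ A, a ≠ x := by
    by_contra h
    push_neg at h
    have hsub : Subsingleton ↥A := ⟨by
      rintro ⟨u, hu⟩ ⟨v, hv⟩
      simp [h u hu, h v hv]⟩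
    exact hAα (T.subsingleton_vanish n _ hsub _)
  let F : Set X := ⇑f '' A
  let C : Set X := F ∪ {a}
  have haC : a ∈ C := Or.inr rfl
  have hCclosed : IsClosed C := hFclosed.union isClosed_singleton
  let Z : Set X := A ∪ C
  have hZclosed : IsClosed Z := hAclosed.union hCclosed
  haveI : CompactSpace ↥Z := isCompact_iff_compactSpace.mp hZclosed.isCompact
  let A' : Set ↥Z := Subtype.val ⁻¹' A
  let C' : Set ↥Z := Subtype.val ⁻¹' C
  have hA'closed : IsClosed A' := hAclosed.preimage continuous_subtype_val
  have hC'closed : IsClosed C' := hCclosed.preimage continuous_subtype_val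
  have hcover : A' ∪ C' = Set.univ := by
    ext z
    simp only [Set.mem_univ, iff_true]
    exact z.2
  have hinter : (A' ∩ C').Nonempty := ⟨⟨a, Or.inl haA⟩, haA, haC⟩
  -- the class `α` restricted to `C'`
  let jC : C(↥C', X) := (subCM Z).comp (subCM C')
  let β : T.coh n ↥C' := T.map n jC α
  -- `α` vanishes on `A ∩ C`
  have hACne : A ∩ C ≠ A := by
    intro h
    have hx : x ∈ A ∩ C := by rw [h]; exact hxA
    rcases hx.2 with h1 | h1
    · exact hxF h1
    · exact hax h1.symm
  have hαAC : T.map n (subCM (A ∩ C)) α = 0 :=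
    hmin (A ∩ C) (hAclosed.inter hCclosed) Set.inter_subset_left hACne
  -- hence `β` vanishes on `A' ∩ C'`
  let w : C(↥(A' ∩ C'), ↥(A ∩ C)) :=
    ⟨fun z => ⟨z.1.1, z.2.1, z.2.2⟩,
      (continuous_subtype_val.comp continuous_subtype_val).subtype_mk _⟩
  let icl : C(↥(A' ∩ C'), ↥C') := inclCM (Set.inter_subset_right : A' ∩ C' ⊆ C')
  have hβinter : T.map n icl β = 0 := by
    have h2 : jC.comp icl = (subCM (A ∩ C)).comp w := by ext z; rfl
    calc T.map n icl β
        = T.map n (jC.comp icl) α := (map_comp_apply T n icl jC α).symm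
      _ = T.map n ((subCM (A ∩ C)).comp w) α := by rw [h2]
      _ = T.map n w (T.map n (subCM (A ∩ C)) α) := map_comp_apply T n w _ α
      _ = 0 := by rw [hαAC, map_zero]
  -- Mayer–Vietoris: glue `0` on `A'` with `β` on `C'`
  have hcompat : T.map n (inclCM (Set.inter_subset_left : A' ∩ C' ⊆ A'))
      (0 : T.coh n ↥A') = T.map n icl β := by
    rw [map_zero, hβinter]
  obtain ⟨ξZ, hξA', hξC'⟩ :=
    (T.mv_exact₂ n hA'closed hC'closed hcover hinter 0 β).mp hcompat
  obtain ⟨ξ, hξ⟩ := hdim Z hZclosed ξZ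
  -- `ξ` vanishes on `A`
  let vA : C(↥A, ↥A') := ⟨fun p => ⟨⟨p.1, Or.inl p.2⟩, p.2⟩,
    (continuous_subtype_val.subtype_mk _).subtype_mk _⟩
  have hfactA : subCM A = ((subCM Z).comp (subCM A')).comp vA := by ext p; rfl
  have hξA : T.map n (subCM A) ξ = 0 := by
    calc T.map n (subCM A) ξ
        = T.map n (((subCM Z).comp (subCM A')).comp vA) ξ := by rw [← hfactA]
      _ = T.map n vA (T.map n ((subCM Z).comp (subCM A')) ξ) := map_comp_apply T n vA _ ξ
      _ = T.map n vA (T.map n (subCM A') (T.map n (subCM Z) ξ)) := by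
          rw [map_comp_apply T n (subCM A') (subCM Z) ξ]
      _ = T.map n vA (T.map n (subCM A') ξZ) := by rw [hξ]
      _ = 0 := by rw [hξA', map_zero]
  -- `ξ` agrees with `α` on `F`
  let vF : C(↥F, ↥C') := ⟨fun p => ⟨⟨p.1, Or.inr (Or.inl p.2)⟩, Or.inl p.2⟩,
    ((continuous_subtype_val.subtype_mk _).subtype_mk _)⟩
  have hfactF : subCM F = ((subCM Z).comp (subCM C')).comp vF := by ext p; rfl
  have hfactF' : jC.comp vF = subCM F := by ext p; rfl
  have hξF : T.map n (subCM F) ξ = T.map n (subCM F) α := by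
    calc T.map n (subCM F) ξ
        = T.map n (((subCM Z).comp (subCM C')).comp vF) ξ := by rw [← hfactF]
      _ = T.map n vF (T.map n ((subCM Z).comp (subCM C')) ξ) := map_comp_apply T n vF _ ξ
      _ = T.map n vF (T.map n (subCM C') (T.map n (subCM Z) ξ)) := by
          rw [map_comp_apply T n (subCM C') (subCM Z) ξ]
      _ = T.map n vF β := by rw [hξ, hξC']
      _ = T.map n vF (T.map n jC α) := rfl
      _ = T.map n (jC.comp vF) α := (map_comp_apply T n vF jC α).symm
      _ = T.map n (subCM F) α := by rw [hfactF']
  -- the map `A → F` induced by `f`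
  let g : C(↥A, ↥F) := ⟨fun p => ⟨f p.1, Set.mem_image_of_mem f p.2⟩,
    (f.continuous.comp continuous_subtype_val).subtype_mk _⟩
  have hgf : (subCM F).comp g = f.comp (subCM A) := by ext p; rfl
  have hhom : ((subCM F).comp g).Homotopic (subCM A) := by
    rw [hgf]
    have := ContinuousMap.Homotopic.comp hf (ContinuousMap.Homotopic.refl (subCM A))
    simpa using this
  have hmapeq : T.map n ((subCM F).comp g) = T.map n (subCM A) :=
    T.homotopy_invariant n _ _ hhom
  have key : T.map n (subCM A) α = T.map n (subCM A) ξ := by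
    calc T.map n (subCM A) α
        = T.map n ((subCM F).comp g) α := by rw [hmapeq]
      _ = T.map n g (T.map n (subCM F) α) := map_comp_apply T n g _ α
      _ = T.map n g (T.map n (subCM F) ξ) := by rw [hξF]
      _ = T.map n ((subCM F).comp g) ξ := (map_comp_apply T n g _ ξ).symm
      _ = T.map n (subCM A) ξ := by rw [hmapeq]
  exact hAα (key.trans hξA)
end
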